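/- arXiv:2302.00150 — 3 statements merged into one kernel-verified Lean document; each statement's English description precedes it below -/
import Mathlib

section
/- Let H be a real Hilbert space, Ω a closed subset of H, f ∈ H with f ∉ Ω, and g₀ ∈ Ω. Then g₀ is a best approximation from Ω to f if and only if both of the following hold: (a) ⟨f - g₀, g - g₀⟩ ≤ 0 for all g ∈ Ω(g₀), and (b) ‖f - g₀‖ ≤ d(f, Ω \ Ω(g₀)), where d(f, S) := inf{‖f - g‖ : g ∈ S} (with the convention that the infimum over the empty set is +∞, so that (b) holds vacuously when Ω \ Ω(g₀) is empty). -/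
open scoped RealInnerProductSpace

/-- The star-shaped subset of `Ω` centered at `g₀`. -/
def starSet {H : Type*} [AddCommGroup H] [Module ℝ H] (Ω : Set H) (g₀ : H) : Set H :=
  {g ∈ Ω | ∀ l : ℝ, l ∈ Set.Ioo (0 : ℝ) 1 → l • g + (1 - l) • g₀ ∈ Ω}

/-- `g₀ ∈ Ω` is a best approximation from the closed set `Ω` to `f ∉ Ω` if and only if
(a) `⟪f - g₀, g - g₀⟫ ≤ 0` for all `g ∈ Ω(g₀)`, and (b) the distance from `f` to `g₀` is
at most the (extended) infimum distance from `f` to `Ω \ Ω(g₀)` (which is `+∞` when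
`Ω \ Ω(g₀)` is empty). -/
theorem best_approx_iff_inner_nonpos_and_dist_le
    {H : Type*} [NormedAddCommGroup H] [InnerProductSpace ℝ H]
    {Ω : Set H} (hΩ : IsClosed Ω) {f g₀ : H} (hf : f ∉ Ω) (hg₀ : g₀ ∈ Ω) :
    (∀ g ∈ Ω, ‖f - g₀‖ ≤ ‖f - g‖) ↔
      ((∀ g ∈ starSet Ω g₀, ⟪f - g₀, g - g₀⟫ ≤ 0) ∧
        edist f g₀ ≤ EMetric.infEdist f (Ω \ starSet Ω g₀)) := by
  constructor
  · intro hba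
    constructor
    · intro g hg
      set u := f - g₀ with hu
      set v := g - g₀ with hv
      have hkey : ∀ l : ℝ, l ∈ Set.Ioo (0 : ℝ) 1 → 2 * l * ⟪u, v⟫ ≤ l ^ 2 * ‖v‖ ^ 2 := by
        intro l hl
        have hmem := hg.2 l hl
        have h1 : ‖u‖ ≤ ‖u - l • v‖ := by
          have h := hba _ hmem
          have heq : f - (l • g + (1 - l) • g₀) = u - l • v := by
            rw [hu, hv]; module
          rwa [heq] at h
        have h2 : ‖u‖ ^ 2 ≤ ‖u - l • v‖ ^ 2 :=
          pow_le_pow_left₀ (norm_nonneg _) h1 2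
        have hexp := norm_sub_sq_real u (l • v)
        rw [real_inner_smul_right, norm_smul, Real.norm_eq_abs, abs_of_pos hl.1, mul_pow] at hexp
        nlinarith
      by_contra hpos
      push_neg at hpos
      have hvne : v ≠ 0 := by
        intro h0
        rw [h0, inner_zero_right] at hpos
        exact lt_irrefl 0 hpos
      have hvn : (0:ℝ) < ‖v‖ ^ 2 := pow_pos (norm_pos_iff.mpr hvne) 2
      set l : ℝ := min (1/2) (⟪u, v⟫ / ‖v‖ ^ 2) with hl
      have hl0 : 0 < l := lt_min (by norm_num) (div_pos hpos hvn)
      have hl1 : l < 1 := lt_of_le_of_lt (min_le_left _ _) (by norm_num)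
      have h := hkey l ⟨hl0, hl1⟩
      have hle : l ≤ ⟪u, v⟫ / ‖v‖ ^ 2 := min_le_right _ _
      have hln : l * ‖v‖ ^ 2 ≤ ⟪u, v⟫ := by
        rw [← div_mul_cancel₀ (⟪u, v⟫) (ne_of_gt hvn)]
        exact mul_le_mul_of_nonneg_right hle hvn.le
      nlinarith
    · refine EMetric.le_infEdist.mpr ?_
      intro g hg
      have h := hba g hg.1
      rw [edist_dist, edist_dist]
      exact ENNReal.ofReal_le_ofReal (by simpa [dist_eq_norm] using h)
  · rintro ⟨ha, hb⟩ g hg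
    by_cases hgs : g ∈ starSet Ω g₀
    · have hi := ha g hgs
      have h2 : ‖f - g₀‖ ^ 2 ≤ ‖f - g‖ ^ 2 := by
        have heq : f - g = (f - g₀) - (g - g₀) := by abel
        have hexp := norm_sub_sq_real (f - g₀) (g - g₀)
        rw [heq]
        nlinarith [sq_nonneg ‖g - g₀‖]
      have := Real.sqrt_le_sqrt h2
      rwa [Real.sqrt_sq (norm_nonneg _), Real.sqrt_sq (norm_nonneg _)] at this
    · have h := hb.trans (EMetric.infEdist_le_edist_of_mem (x := f) ⟨hg, hgs⟩)
      rw [edist_dist, edist_dist] at h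
      have := (ENNReal.ofReal_le_ofReal_iff dist_nonneg).mp h
      simpa [dist_eq_norm] using this
end

section
/- Let H be a real Hilbert space, Ω a closed subset of H containing 0, and f ∈ H with f ∉ Ω. Let g₀ ∈ Ω be a best approximation from Ω to f, and suppose λg₀ ∈ Ω for all λ ∈ (0,1) (equivalently, 0 ∈ Ω(g₀)). Then ‖f‖² ≥ ‖g₀‖² + ‖f - g₀‖². -/
/-- If `g₀ ∈ Ω` is a best approximation from the closed set `Ω ∋ 0` to `f ∉ Ω`, and
`λ • g₀ ∈ Ω` for all `λ ∈ (0,1)`, then `‖f‖² ≥ ‖g₀‖² + ‖f - g₀‖²`. -/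
theorem best_approx_norm_sq_ge
    {H : Type*} [NormedAddCommGroup H] [InnerProductSpace ℝ H]
    {Ω : Set H} (hΩ : IsClosed Ω) (h0 : (0 : H) ∈ Ω) {f g₀ : H} (hf : f ∉ Ω) (hg₀ : g₀ ∈ Ω)
    (hbest : ∀ g ∈ Ω, ‖f - g₀‖ ≤ ‖f - g‖)
    (hseg : ∀ l : ℝ, l ∈ Set.Ioo (0 : ℝ) 1 → l • g₀ ∈ Ω) :
    ‖g₀‖ ^ 2 + ‖f - g₀‖ ^ 2 ≤ ‖f‖ ^ 2 := by
  have key : ∀ l : ℝ, l ∈ Set.Ioo (0 : ℝ) 1 →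
      (1 + l) * ‖g₀‖ ^ 2 ≤ 2 * inner ℝ f g₀ := by
    intro l hl
    have h1 := hbest _ (hseg l hl)
    have h2 : ‖f - g₀‖ ^ 2 ≤ ‖f - l • g₀‖ ^ 2 := by
      have := norm_nonneg (f - g₀)
      nlinarith
    have e1 : ‖f - g₀‖ ^ 2 = ‖f‖ ^ 2 - 2 * inner ℝ f g₀ + ‖g₀‖ ^ 2 := by
      rw [← real_inner_self_eq_norm_sq, ← real_inner_self_eq_norm_sq,
        ← real_inner_self_eq_norm_sq]
      simp only [inner_sub_sub_self, real_inner_comm]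
      ring
    have e2 : ‖f - l • g₀‖ ^ 2 = ‖f‖ ^ 2 - 2 * l * inner ℝ f g₀ + l ^ 2 * ‖g₀‖ ^ 2 := by
      rw [← real_inner_self_eq_norm_sq, ← real_inner_self_eq_norm_sq,
        ← real_inner_self_eq_norm_sq]
      simp only [inner_sub_sub_self, real_inner_smul_left, real_inner_smul_right,
        real_inner_comm]
      ring
    rw [e1, e2] at h2
    have hl1 : (0:ℝ) < 1 - l := by linarith [hl.2]
    nlinarith [hl.1, hl.2]
  have key2 : ‖g₀‖ ^ 2 ≤ inner ℝ f g₀ := by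
    by_contra hc
    push_neg at hc
    have hg : (0:ℝ) < ‖g₀‖ ^ 2 := by
      by_contra hg
      push_neg at hg
      have : ‖g₀‖ ^ 2 = 0 := le_antisymm hg (by positivity)
      have hz : g₀ = 0 := norm_eq_zero.mp ((pow_eq_zero_iff two_ne_zero).mp this)
      rw [hz] at hc
      simp at hc
    set gap : ℝ := ‖g₀‖ ^ 2 - inner ℝ f g₀ with hgap
    have hgap0 : 0 < gap := by simp [hgap]; linarith
    set ε : ℝ := min (1/2) (gap / ‖g₀‖ ^ 2) with hε
    have hε0 : 0 < ε := lt_min (by norm_num) (by positivity)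
    have hε1 : ε < 1 := lt_of_le_of_lt (min_le_left _ _) (by norm_num)
    have hεle : ε * ‖g₀‖ ^ 2 ≤ gap := by
      have := min_le_right (1/2) (gap / ‖g₀‖ ^ 2)
      calc ε * ‖g₀‖ ^ 2 ≤ (gap / ‖g₀‖ ^ 2) * ‖g₀‖ ^ 2 := by
            apply mul_le_mul_of_nonneg_right this (le_of_lt hg)
        _ = gap := div_mul_cancel₀ gap (ne_of_gt hg)
    have hk := key (1 - ε) ⟨by linarith, by linarith⟩
    have : (1 + (1 - ε)) * ‖g₀‖ ^ 2 = 2 * ‖g₀‖ ^ 2 - ε * ‖g₀‖ ^ 2 := by ring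
    nlinarith
  have e1 : ‖f - g₀‖ ^ 2 = ‖f‖ ^ 2 - 2 * inner ℝ f g₀ + ‖g₀‖ ^ 2 := by
    rw [← real_inner_self_eq_norm_sq, ← real_inner_self_eq_norm_sq,
      ← real_inner_self_eq_norm_sq]
    simp only [inner_sub_sub_self, real_inner_comm]
    ring
  nlinarith
end

section
/- Let H be a real Hilbert space, Ω a closed subset of H containing 0, and f ∈ H with f ∉ Ω. Let g₀ ∈ Ω be a best approximation from Ω to f with λg₀ ∈ Ω for all λ ∈ (0,1). Then ‖f - g₀‖ ≤ ‖f‖; moreover, if g₀ ≠ 0 then ‖f - g₀‖ < ‖f‖. -/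
/-- If `g₀ ∈ Ω` is a best approximation from the closed set `Ω ∋ 0` to `f ∉ Ω`, and
`λ • g₀ ∈ Ω` for all `λ ∈ (0,1)`, then `‖f - g₀‖ ≤ ‖f‖`, with strict inequality when
`g₀ ≠ 0`. -/
theorem best_approx_norm_le
    {H : Type*} [NormedAddCommGroup H] [InnerProductSpace ℝ H]
    {Ω : Set H} (hΩ : IsClosed Ω) (h0 : (0 : H) ∈ Ω) {f g₀ : H} (hf : f ∉ Ω) (hg₀ : g₀ ∈ Ω)
    (hbest : ∀ g ∈ Ω, ‖f - g₀‖ ≤ ‖f - g‖)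
    (hseg : ∀ l : ℝ, l ∈ Set.Ioo (0 : ℝ) 1 → l • g₀ ∈ Ω) :
    ‖f - g₀‖ ≤ ‖f‖ ∧ (g₀ ≠ 0 → ‖f - g₀‖ < ‖f‖) := by
  have h1 : ‖f - g₀‖ ≤ ‖f‖ := by simpa using hbest 0 h0
  refine ⟨h1, fun hne => ?_⟩
  rcases lt_or_eq_of_le h1 with h | h
  · exact h
  · exfalso
    have e1 : ‖f - g₀‖ ^ 2 = ‖f‖ ^ 2 - 2 * inner ℝ f g₀ + ‖g₀‖ ^ 2 :=
      norm_sub_sq_real f g₀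
    have e2 : ‖f - (1/2 : ℝ) • g₀‖ ^ 2
        = ‖f‖ ^ 2 - 2 * ((1/2 : ℝ) * inner ℝ f g₀) + (1/2 : ℝ)^2 * ‖g₀‖ ^ 2 := by
      rw [norm_sub_sq_real, real_inner_smul_right, norm_smul]
      norm_num [mul_pow]
    have hb := hbest ((1/2 : ℝ) • g₀) (hseg (1/2) (by norm_num))
    have hb2 : ‖f - g₀‖ ^ 2 ≤ ‖f - (1/2 : ℝ) • g₀‖ ^ 2 := by
      exact pow_le_pow_left₀ (norm_nonneg _) hb 2
    have hg : (0:ℝ) < ‖g₀‖ := norm_pos_iff.mpr hne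
    have hsq : ‖f - g₀‖ ^ 2 = ‖f‖ ^ 2 := by rw [h]
    nlinarith [hb2, e1, e2, hsq, hg]
end
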